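/- For every integer k ≥ 2, with p_k = 2^{1-k}, G(x) = (1/2)(1 - (1/2)(1-Φ(x^{-1/2}))/(1-Φ(√2))), one has p_k·G((k²+k+1)/(2k+1)²) + (1-p_k)·G((k²+k-1)/(2k+1)²) ≥ G(1/4). -/

import Mathlib

open Real

/-- The standard normal cumulative distribution function. -/
noncomputable def normalCDF (x : ℝ) : ℝ :=
  ∫ t in Set.Iic x, (Real.sqrt (2 * Real.pi))⁻¹ * Real.exp (-t ^ 2 / 2)

/-- The standard normal density. -/
noncomputable def normalPDF (x : ℝ) : ℝ :=
  (Real.sqrt (2 * Real.pi))⁻¹ * Real.exp (-x ^ 2 / 2)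

/-- The function G from the paper. -/
noncomputable def G (x : ℝ) : ℝ :=
  (1/2) * (1 - (1/2) * (1 - normalCDF ((Real.sqrt x)⁻¹)) / (1 - normalCDF (Real.sqrt 2)))

/-!
`G` is an increasing affine function of `Φ(x^{-1/2})`, so the claim is
`Φ(2) ≤ p Φ(α) + (1 - p) Φ(β)` with `α = (2k+1)/√(k²+k+1) ≤ 2 ≤ β = (2k+1)/√(k²+k-1)`.
The normal density decreases on `[0, ∞)`, hence `Φ(2) - Φ(α) ≤ (2 - α) φ(α)` and
`(β - 2) φ(β) ≤ Φ(β) - Φ(2)`; it therefore suffices that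
`p (2 - α) e^{(β² - α²)/2} ≤ (1 - p)(β - 2)`.
Now `β² - α² = 3/(k²+k+1) + 5/(k²+k-1) ≤ 10/7` and `2 - α ≤ 3/5 (β - 2)`, which is enough
once `p ≤ 1/4`, i.e. `k ≥ 3`; for `k = 2` the inequality is checked numerically using
`e^{5/7} < 2.12`.
-/

open MeasureTheory ProbabilityTheory Set

lemma normalPDF_eq_gaussianPDFReal : normalPDF = gaussianPDFReal 0 1 := by
  ext x
  simp [normalPDF, gaussianPDFReal]

lemma normalPDF_pos (x : ℝ) : 0 < normalPDF x := by
  unfold normalPDF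
  positivity

lemma integrable_normalPDF : Integrable normalPDF := by
  rw [normalPDF_eq_gaussianPDFReal]
  exact integrable_gaussianPDFReal 0 1

lemma integral_normalPDF : ∫ x, normalPDF x = 1 := by
  rw [normalPDF_eq_gaussianPDFReal]
  exact integral_gaussianPDFReal_eq_one 0 one_ne_zero

lemma normalCDF_eq_setIntegral (x : ℝ) : normalCDF x = ∫ t in Iic x, normalPDF t := rfl

lemma normalCDF_sub_normalCDF {x y : ℝ} (h : x ≤ y) :
    normalCDF y - normalCDF x = ∫ t in Ioc x y, normalPDF t := by
  rw [normalCDF_eq_setIntegral, normalCDF_eq_setIntegral,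
    intervalIntegral.integral_Iic_sub_Iic integrable_normalPDF.integrableOn
      integrable_normalPDF.integrableOn,
    intervalIntegral.integral_of_le h]

lemma one_sub_normalCDF (x : ℝ) : 1 - normalCDF x = ∫ t in Ioi x, normalPDF t := by
  rw [← integral_normalPDF, normalCDF_eq_setIntegral, ← intervalIntegral.integral_Iic_add_Ioi
    integrable_normalPDF.integrableOn integrable_normalPDF.integrableOn, add_sub_cancel_left]

lemma normalCDF_lt_one (x : ℝ) : normalCDF x < 1 := by
  rw [← sub_pos, one_sub_normalCDF, setIntegral_pos_iff_support_of_nonneg_ae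
    (.of_forall fun t => (normalPDF_pos t).le) integrable_normalPDF.integrableOn,
    Function.support_eq_univ fun t => (normalPDF_pos t).ne', univ_inter, volume_Ioi]
  exact ENNReal.zero_lt_top

lemma normalPDF_antitoneOn : AntitoneOn normalPDF (Ici 0) := by
  intro x hx y _ hxy
  unfold normalPDF
  gcongr

lemma normalCDF_sub_le {x y : ℝ} (hx : 0 ≤ x) (h : x ≤ y) :
    normalCDF y - normalCDF x ≤ (y - x) * normalPDF x := by
  rw [normalCDF_sub_normalCDF h]
  calc ∫ t in Ioc x y, normalPDF t ≤ ∫ _ in Ioc x y, normalPDF x :=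
        setIntegral_mono_on integrable_normalPDF.integrableOn
          (integrableOn_const measure_Ioc_lt_top.ne) measurableSet_Ioc
          fun t ht => normalPDF_antitoneOn hx (hx.trans ht.1.le) ht.1.le
    _ = (y - x) * normalPDF x := by
        rw [setIntegral_const, Real.volume_real_Ioc_of_le h, smul_eq_mul]

lemma le_normalCDF_sub {x y : ℝ} (hx : 0 ≤ x) (h : x ≤ y) :
    (y - x) * normalPDF y ≤ normalCDF y - normalCDF x := by
  rw [normalCDF_sub_normalCDF h]
  calc (y - x) * normalPDF y = ∫ _ in Ioc x y, normalPDF y := by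
        rw [setIntegral_const, Real.volume_real_Ioc_of_le h, smul_eq_mul]
    _ ≤ ∫ t in Ioc x y, normalPDF t :=
        setIntegral_mono_on (integrableOn_const measure_Ioc_lt_top.ne)
          integrable_normalPDF.integrableOn measurableSet_Ioc
          fun t ht => normalPDF_antitoneOn (hx.trans ht.1.le) (hx.trans h) ht.2

lemma normalPDF_mul_exp (x y : ℝ) : normalPDF y * exp ((y ^ 2 - x ^ 2) / 2) = normalPDF x := by
  rw [normalPDF, normalPDF, mul_assoc, ← exp_add]
  ring_nf

lemma normalCDF_le_weighted {p x y c : ℝ} (hx : 0 ≤ x) (hxc : x ≤ c) (hcy : c ≤ y)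
    (hp : 0 ≤ p) (hp1 : p ≤ 1)
    (h : p * (c - x) * exp ((y ^ 2 - x ^ 2) / 2) ≤ (1 - p) * (y - c)) :
    normalCDF c ≤ p * normalCDF x + (1 - p) * normalCDF y := by
  have hpdf : p * ((c - x) * normalPDF x) ≤ (1 - p) * ((y - c) * normalPDF y) := by
    rw [← normalPDF_mul_exp x y]
    linarith [mul_le_mul_of_nonneg_right h (normalPDF_pos y).le]
  have hleft := mul_le_mul_of_nonneg_left (normalCDF_sub_le hx hxc) hp
  have hright :=
    mul_le_mul_of_nonneg_left (le_normalCDF_sub (hx.trans hxc) hcy) (sub_nonneg.2 hp1)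
  linarith

lemma weighted_G_sub_G (p a b c : ℝ) :
    p * G a + (1 - p) * G b - G c =
      (p * normalCDF (√a)⁻¹ + (1 - p) * normalCDF (√b)⁻¹ - normalCDF (√c)⁻¹) /
        (1 - normalCDF √2) / 4 := by
  unfold G
  ring

lemma G_le_weighted_G {p a b c : ℝ}
    (h : normalCDF (√c)⁻¹ ≤ p * normalCDF (√a)⁻¹ + (1 - p) * normalCDF (√b)⁻¹) :
    G c ≤ p * G a + (1 - p) * G b := by
  rw [← sub_nonneg, weighted_G_sub_G]
  have := normalCDF_lt_one √2
  exact div_nonneg (div_nonneg (by linarith) (by linarith)) (by norm_num)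

lemma sq_inv_sqrt_div_sq_mul {a : ℝ} (ha : 0 < a) (m : ℝ) :
    (√(a / m ^ 2))⁻¹ ^ 2 * a = m ^ 2 := by
  rw [inv_pow, sq_sqrt (by positivity), inv_div, div_mul_cancel₀ _ ha.ne']

lemma exp_five_div_seven_lt : exp (5 / 7) < 2.12 := by
  have h := exp_bound_div_one_sub_of_interval' (x := 5 / 56) (by norm_num) (by norm_num)
  calc exp (5 / 7) = exp (5 / 56) ^ 8 := by rw [← exp_nat_mul]; norm_num
    _ < (1 / (1 - 5 / 56)) ^ 8 := by gcongr
    _ < 2.12 := by norm_num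

section Nodes

/- `α` and `β` stand for `(2K+1)/√(K²+K+1)` and `(2K+1)/√(K²+K-1)`; they are described through
their squares to keep square roots out of the algebra. -/
variable {K α β : ℝ}

lemma four_sub_sq_eq (hα : α ^ 2 * (K ^ 2 + K + 1) = (2 * K + 1) ^ 2) :
    4 - α ^ 2 = 3 / (K ^ 2 + K + 1) := by
  rw [eq_div_iff (by nlinarith [sq_nonneg (K + 1 / 2)])]
  linear_combination -hα

lemma sq_sub_four_eq (hK : 2 ≤ K) (hβ : β ^ 2 * (K ^ 2 + K - 1) = (2 * K + 1) ^ 2) :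
    β ^ 2 - 4 = 5 / (K ^ 2 + K - 1) := by
  rw [eq_div_iff (by nlinarith)]
  linear_combination hβ

lemma le_two_of_sq_mul_eq (hα0 : 0 < α) (hα : α ^ 2 * (K ^ 2 + K + 1) = (2 * K + 1) ^ 2) :
    α ≤ 2 := by
  have : 0 ≤ 4 - α ^ 2 := by
    rw [four_sub_sq_eq hα]
    exact div_nonneg (by norm_num) (by nlinarith [sq_nonneg (K + 1 / 2)])
  nlinarith

lemma two_le_of_sq_mul_eq (hK : 2 ≤ K) (hβ0 : 0 < β)
    (hβ : β ^ 2 * (K ^ 2 + K - 1) = (2 * K + 1) ^ 2) : 2 ≤ β := by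
  have : 0 ≤ β ^ 2 - 4 := by
    rw [sq_sub_four_eq hK hβ]
    exact div_nonneg (by norm_num) (by nlinarith)
  nlinarith

lemma sq_sub_sq_le (hK : 2 ≤ K) (hα : α ^ 2 * (K ^ 2 + K + 1) = (2 * K + 1) ^ 2)
    (hβ : β ^ 2 * (K ^ 2 + K - 1) = (2 * K + 1) ^ 2) : β ^ 2 - α ^ 2 ≤ 10 / 7 := by
  have ha : 3 / (K ^ 2 + K + 1) ≤ 3 / 7 :=
    div_le_div_of_nonneg_left (by norm_num) (by norm_num) (by nlinarith)
  have hb : 5 / (K ^ 2 + K - 1) ≤ 5 / 5 :=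
    div_le_div_of_nonneg_left (by norm_num) (by norm_num) (by nlinarith)
  linarith [four_sub_sq_eq hα, sq_sub_four_eq hK hβ]

lemma two_sub_le_three_fifths_mul (hK : 2 ≤ K) (hα0 : 0 < α)
    (hα : α ^ 2 * (K ^ 2 + K + 1) = (2 * K + 1) ^ 2) (hβ0 : 0 < β)
    (hβ : β ^ 2 * (K ^ 2 + K - 1) = (2 * K + 1) ^ 2) :
    2 - α ≤ 3 / 5 * (β - 2) := by
  have ha : 0 < K ^ 2 + K + 1 := by positivity
  have hb : 0 < K ^ 2 + K - 1 := by nlinarith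
  have hαβ : α ≤ β := (le_two_of_sq_mul_eq hα0 hα).trans (two_le_of_sq_mul_eq hK hβ0 hβ)
  have hX : 2 - α = 3 / ((2 + α) * (K ^ 2 + K + 1)) := by
    rw [eq_div_iff (by positivity)]
    linear_combination -hα
  have hY : β - 2 = 5 / ((β + 2) * (K ^ 2 + K - 1)) := by
    rw [eq_div_iff (by positivity)]
    linear_combination hβ
  have hQP : (β + 2) * (K ^ 2 + K - 1) ≤ (2 + α) * (K ^ 2 + K + 1) := by
    have : β * (K ^ 2 + K - 1) ≤ α * (K ^ 2 + K + 1) := by nlinarith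
    nlinarith
  rw [hX, hY, ← mul_div_assoc, show (3 : ℝ) / 5 * 5 = 3 by norm_num]
  exact div_le_div_of_nonneg_left (by norm_num) (by positivity) hQP

lemma mul_two_sub_mul_exp_le_of_le_quarter (hK : 2 ≤ K) (hα0 : 0 < α)
    (hα : α ^ 2 * (K ^ 2 + K + 1) = (2 * K + 1) ^ 2) (hβ0 : 0 < β)
    (hβ : β ^ 2 * (K ^ 2 + K - 1) = (2 * K + 1) ^ 2) {p : ℝ} (hp : 0 ≤ p) (hp4 : p ≤ 1 / 4) :
    p * (2 - α) * exp ((β ^ 2 - α ^ 2) / 2) ≤ (1 - p) * (β - 2) := by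
  have hE : exp ((β ^ 2 - α ^ 2) / 2) ≤ 5 := calc
    exp ((β ^ 2 - α ^ 2) / 2) ≤ exp (5 / 7) :=
      exp_le_exp.2 (by linarith [sq_sub_sq_le hK hα hβ])
    _ ≤ 5 := by linarith [exp_five_div_seven_lt]
  have hα2 : 0 ≤ 2 - α := sub_nonneg.2 (le_two_of_sq_mul_eq hα0 hα)
  have hβ2 : 0 ≤ β - 2 := sub_nonneg.2 (two_le_of_sq_mul_eq hK hβ0 hβ)
  calc p * (2 - α) * exp ((β ^ 2 - α ^ 2) / 2) ≤ p * (3 / 5 * (β - 2)) * 5 := by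
        gcongr
        exact two_sub_le_three_fifths_mul hK hα0 hα hβ0 hβ
    _ = 3 * p * (β - 2) := by ring
    _ ≤ (1 - p) * (β - 2) := by gcongr; linarith

end Nodes

lemma half_mul_two_sub_mul_exp_le {α β : ℝ} (hα0 : 0 < α) (hα : α ^ 2 * 7 = 25) (hβ0 : 0 < β)
    (hβ : β ^ 2 * 5 = 25) :
    1 / 2 * (2 - α) * exp ((β ^ 2 - α ^ 2) / 2) ≤ (1 - 1 / 2) * (β - 2) := by
  have hD : (β ^ 2 - α ^ 2) / 2 = 5 / 7 := by linarith
  have hα2 : α ≤ 2 := by nlinarith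
  have hα' : 1.8898 ≤ α := by nlinarith
  have hβ' : 2.236 ≤ β := by nlinarith
  rw [hD]
  nlinarith [exp_five_div_seven_lt, exp_pos (5 / 7)]

lemma normalCDF_two_le_weighted (k : ℕ) (hk : 2 ≤ k) {α β : ℝ} (hα0 : 0 < α)
    (hα : α ^ 2 * ((k : ℝ) ^ 2 + k + 1) = (2 * k + 1) ^ 2) (hβ0 : 0 < β)
    (hβ : β ^ 2 * ((k : ℝ) ^ 2 + k - 1) = (2 * k + 1) ^ 2) :
    normalCDF 2 ≤ 2 ^ (1 - (k : ℤ)) * normalCDF α + (1 - 2 ^ (1 - (k : ℤ))) * normalCDF β := by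
  have hK : (2 : ℝ) ≤ k := by exact_mod_cast hk
  have hp : (0 : ℝ) < 2 ^ (1 - (k : ℤ)) := by positivity
  have hp1 : (2 : ℝ) ^ (1 - (k : ℤ)) ≤ 1 := zpow_le_one_of_nonpos₀ (by norm_num) (by omega)
  refine normalCDF_le_weighted hα0.le (le_two_of_sq_mul_eq hα0 hα)
    (two_le_of_sq_mul_eq hK hβ0 hβ) hp.le hp1 ?_
  obtain rfl | hk3 := hk.eq_or_lt
  · norm_num at hα hβ
    rw [show (2 : ℝ) ^ (1 - ((2 : ℕ) : ℤ)) = 1 / 2 by norm_num]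
    exact half_mul_two_sub_mul_exp_le hα0 hα hβ0 hβ
  · refine mul_two_sub_mul_exp_le_of_le_quarter hK hα0 hα hβ0 hβ hp.le ?_
    calc (2 : ℝ) ^ (1 - (k : ℤ)) ≤ 2 ^ (-2 : ℤ) := zpow_le_zpow_right₀ (by norm_num) (by omega)
      _ = 1 / 4 := by norm_num

theorem stmt_9 (k : ℕ) (hk : 2 ≤ k) :
    (2 : ℝ) ^ (1 - (k : ℤ)) * G (((k : ℝ) ^ 2 + k + 1) / (2 * (k : ℝ) + 1) ^ 2) +
      (1 - (2 : ℝ) ^ (1 - (k : ℤ))) * G (((k : ℝ) ^ 2 + k - 1) / (2 * (k : ℝ) + 1) ^ 2) ≥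
      G (1/4) := by
  have ha : (0 : ℝ) < (k : ℝ) ^ 2 + k + 1 := by positivity
  have hb : (0 : ℝ) < (k : ℝ) ^ 2 + k - 1 := by
    have : (2 : ℝ) ≤ k := by exact_mod_cast hk
    nlinarith
  have h2 : (√(1 / 4 : ℝ))⁻¹ = 2 := by
    rw [show (1 / 4 : ℝ) = 2⁻¹ ^ 2 by norm_num, sqrt_sq (by norm_num), inv_inv]
  refine G_le_weighted_G ?_
  rw [h2]
  exact normalCDF_two_le_weighted k hk (by positivity) (sq_inv_sqrt_div_sq_mul ha _)
    (inv_pos.2 (sqrt_pos.2 (by positivity))) (sq_inv_sqrt_div_sq_mul hb _)
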